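/- Let R be a k-ring with good partition (X_1,…,X_k). Then for every i, the graph R − X_i (the induced subgraph on V(R) ∖ X_i) is chordal. -/

import Mathlib

open SimpleGraph Set

variable {V : Type*}

/-- closed neighborhood -/
def closedNbhd (G : SimpleGraph V) (v : V) : Set V := insert v (G.neighborSet v)

def IsRingPartition (G : SimpleGraph V) (k : ℕ) (X : ZMod k → Set V) : Prop :=
  4 ≤ k ∧ (∀ i, (X i).Nonempty) ∧ (Pairwise fun i j => Disjoint (X i) (X j)) ∧
    (⋃ i, X i) = Set.univ ∧
    ∀ i : ZMod k, ∃ (n : ℕ) (u : Fin (n + 1) → V),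
      Function.Injective u ∧ Set.range u = X i ∧
      (∀ a b : Fin (n + 1), a ≤ b → closedNbhd G (u b) ⊆ closedNbhd G (u a)) ∧
      X i ⊆ closedNbhd G (u (Fin.last n)) ∧
      closedNbhd G (u 0) = X (i - 1) ∪ X i ∪ X (i + 1)

def IsChordal (G : SimpleGraph V) : Prop := ∀ n, 4 ≤ n → IsEmpty (cycleGraph n ↪g G)

/-! Let `C` be an induced cycle of length at least four in `R`. Two consecutive vertices of `C`
cannot lie in the same part `X j`: their closed neighbourhoods are nested, and the outer one would
contain the other cycle neighbour of the inner vertex, giving a chord. Now measure the part of each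
vertex of `C` by its distance `(j - i).val` from `X i` going around the ring. If `C` avoided `X i`,
at a vertex of `C` where this height is maximal both cycle neighbours would have to lie one part
lower, hence in a common part, which is a clique: again a chord. So every such cycle meets `X i`. -/

theorem ZMod.val_add_one_of_add_one_ne_zero {k : ℕ} [NeZero k] {z : ZMod k} (hz : z + 1 ≠ 0) :
    (z + 1).val = z.val + 1 := by
  obtain ⟨n, rfl⟩ := Nat.exists_eq_add_one_of_ne_zero (NeZero.ne k)
  refine Fin.val_add_one_of_lt' (Nat.succ_lt_succ (Fin.val_lt_last ?_))
  rintro rfl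
  exact hz (Fin.last_add_one n)

theorem cycleGraph_adj_add_one {n : ℕ} (j : Fin (n + 2)) : (cycleGraph (n + 2)).Adj j (j + 1) :=
  cycleGraph_adj.mpr (Or.inr (add_sub_cancel_left j 1))

theorem cycleGraph_not_adj_add_two {n : ℕ} (j : Fin (n + 4)) :
    ¬ (cycleGraph (n + 4)).Adj j (j + 2) := by
  rw [cycleGraph_adj, sub_add_cancel_left, add_sub_cancel_left, neg_eq_iff_eq_neg]
  simp [Fin.ext_iff, Fin.val_neg, Nat.mod_eq_of_lt (show 2 < n + 4 by omega)]

section closedNbhd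

variable {G : SimpleGraph V} {v w : V}

theorem mem_closedNbhd_iff : w ∈ closedNbhd G v ↔ w = v ∨ G.Adj v w := Iff.rfl

theorem mem_closedNbhd_of_adj (h : G.Adj v w) : w ∈ closedNbhd G v := Or.inr h

theorem mem_closedNbhd_comm : w ∈ closedNbhd G v ↔ v ∈ closedNbhd G w := by
  simp only [mem_closedNbhd_iff, eq_comm, G.adj_comm]

end closedNbhd

namespace SimpleGraph.Embedding

variable {G : SimpleGraph V} {m : ℕ} (e : cycleGraph (m + 4) ↪g G)

theorem adj_add_one (j : Fin (m + 4)) : G.Adj (e j) (e (j + 1)) :=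
  e.map_adj_iff.mpr (cycleGraph_adj_add_one j)

theorem add_two_notMem_closedNbhd (j : Fin (m + 4)) : e (j + 2) ∉ closedNbhd G (e j) := by
  rintro (heq | hadj)
  · have h2 : (2 : Fin (m + 4)) = 0 := by simpa using e.injective heq
    simp [Fin.ext_iff, Nat.mod_eq_of_lt (show 2 < m + 4 by omega)] at h2
  · exact cycleGraph_not_adj_add_two j (e.map_adj_iff.mp hadj)

theorem not_closedNbhd_add_one_subset (j : Fin (m + 4)) :
    ¬ closedNbhd G (e (j + 1)) ⊆ closedNbhd G (e j) := fun hsub => by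
  have hadj := e.adj_add_one (j + 1)
  rw [show j + 1 + 1 = j + 2 by abel] at hadj
  exact e.add_two_notMem_closedNbhd j (hsub (mem_closedNbhd_of_adj hadj))

theorem not_closedNbhd_subset_add_one (j : Fin (m + 4)) :
    ¬ closedNbhd G (e j) ⊆ closedNbhd G (e (j + 1)) := fun hsub => by
  obtain ⟨l, rfl⟩ : ∃ l, j = l + 1 := ⟨j - 1, (sub_add_cancel j 1).symm⟩
  have hl := hsub (mem_closedNbhd_of_adj (e.adj_add_one l).symm)
  rw [show l + 1 + 1 = l + 2 by abel] at hl
  exact e.add_two_notMem_closedNbhd l (mem_closedNbhd_comm.mp hl)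

end SimpleGraph.Embedding

namespace IsRingPartition

variable {G : SimpleGraph V} {k : ℕ} {X : ZMod k → Set V} {v w : V} {j j' : ZMod k}

theorem exists_mem (h : IsRingPartition G k X) (v : V) : ∃ j, v ∈ X j :=
  Set.iUnion_eq_univ_iff.mp h.2.2.2.1 v

theorem eq_of_mem_of_mem (h : IsRingPartition G k X) (hv : v ∈ X j) (hv' : v ∈ X j') :
    j = j' := by
  by_contra hne
  exact Set.disjoint_left.mp (h.2.2.1 hne) hv hv'

theorem closedNbhd_subset (h : IsRingPartition G k X) (hv : v ∈ X j) :
    closedNbhd G v ⊆ X (j - 1) ∪ X j ∪ X (j + 1) := by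
  obtain ⟨n, u, -, hu, hmono, -, hu0⟩ := h.2.2.2.2 j
  obtain ⟨a, rfl⟩ := hu ▸ hv
  exact hu0 ▸ hmono 0 a (Fin.zero_le a)

theorem mem_closedNbhd_of_mem (h : IsRingPartition G k X) (hv : v ∈ X j) (hw : w ∈ X j) :
    w ∈ closedNbhd G v := by
  obtain ⟨n, u, -, hu, hmono, hlast, -⟩ := h.2.2.2.2 j
  obtain ⟨a, rfl⟩ := hu ▸ hv
  exact hmono a (Fin.last n) (Fin.le_last a) (hlast hw)

theorem closedNbhd_subset_total (h : IsRingPartition G k X) (hv : v ∈ X j) (hw : w ∈ X j) :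
    closedNbhd G v ⊆ closedNbhd G w ∨ closedNbhd G w ⊆ closedNbhd G v := by
  obtain ⟨n, u, -, hu, hmono, -, -⟩ := h.2.2.2.2 j
  obtain ⟨a, rfl⟩ := hu ▸ hv
  obtain ⟨b, rfl⟩ := hu ▸ hw
  exact (le_total b a).imp (hmono b a) (hmono a b)

theorem eq_sub_one_or_eq_or_eq_add_one_of_adj (h : IsRingPartition G k X) (hv : v ∈ X j)
    (hw : w ∈ X j') (hvw : G.Adj v w) : j' = j - 1 ∨ j' = j ∨ j' = j + 1 := by
  rcases h.closedNbhd_subset hv (mem_closedNbhd_of_adj hvw) with (hw' | hw') | hw'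
  · exact Or.inl (h.eq_of_mem_of_mem hw hw')
  · exact Or.inr (Or.inl (h.eq_of_mem_of_mem hw hw'))
  · exact Or.inr (Or.inr (h.eq_of_mem_of_mem hw hw'))

variable {m : ℕ}

theorem ne_add_one_of_cycleGraph_embedding (h : IsRingPartition G k X)
    (e : cycleGraph (m + 4) ↪g G) {p : Fin (m + 4) → ZMod k} (hp : ∀ j, e j ∈ X (p j))
    (j : Fin (m + 4)) : p j ≠ p (j + 1) := by
  intro hj
  rcases h.closedNbhd_subset_total (hp j) (hj ▸ hp (j + 1)) with hsub | hsub
  · exact e.not_closedNbhd_subset_add_one j hsub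
  · exact e.not_closedNbhd_add_one_subset j hsub

theorem exists_mem_of_cycleGraph_embedding (h : IsRingPartition G k X)
    (e : cycleGraph (m + 4) ↪g G) (i : ZMod k) : ∃ j, e j ∈ X i := by
  by_contra! hi
  have : NeZero k := ⟨by have := h.1; omega⟩
  choose p hp using fun j => h.exists_mem (e j)
  have hpi : ∀ j, p j - i ≠ 0 := fun j hj => hi j (sub_eq_zero.mp hj ▸ hp j)
  obtain ⟨l', hmax⟩ := Finite.exists_max fun j => (p j - i).val
  obtain ⟨l, rfl⟩ : ∃ l, l' = l + 1 := ⟨l' - 1, (sub_add_cancel l' 1).symm⟩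
  have hlower : ∀ b, G.Adj (e (l + 1)) (e b) → p b ≠ p (l + 1) → p b = p (l + 1) - 1 := by
    intro b hb hne
    rcases h.eq_sub_one_or_eq_or_eq_add_one_of_adj (hp _) (hp b) hb with hb' | hb' | hb'
    · exact hb'
    · exact absurd hb' hne
    · have hbi : p b - i = p (l + 1) - i + 1 := by rw [hb']; ring
      have hle := hmax b
      rw [hbi, ZMod.val_add_one_of_add_one_ne_zero (hbi ▸ hpi b)] at hle
      omega
  have hl : p l = p (l + 1) - 1 :=
    hlower l (e.adj_add_one l).symm (h.ne_add_one_of_cycleGraph_embedding e hp l)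
  have hl2 : p (l + 2) = p (l + 1) - 1 := by
    have hadj := e.adj_add_one (l + 1)
    have hne := h.ne_add_one_of_cycleGraph_embedding e hp (l + 1)
    rw [show l + 1 + 1 = l + 2 by abel] at hadj hne
    exact hlower (l + 2) hadj hne.symm
  exact e.add_two_notMem_closedNbhd l (h.mem_closedNbhd_of_mem (hl ▸ hp l) (hl2 ▸ hp (l + 2)))

end IsRingPartition

theorem stmt6 (G : SimpleGraph V) (k : ℕ) (X : ZMod k → Set V)
    (h : IsRingPartition G k X) :
    ∀ i : ZMod k, IsChordal (G.induce (X i)ᶜ) := by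
  intro i n hn
  obtain ⟨m, rfl⟩ := Nat.exists_eq_add_of_le' hn
  refine ⟨fun e => ?_⟩
  obtain ⟨j, hj⟩ := h.exists_mem_of_cycleGraph_embedding ((Embedding.induce _).comp e) i
  exact (e j).2 hj
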